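/- Let (A,B,P,Q,μ,ν) be a graded Morita context with idempotent graded rings, unital bimodules and surjective trace maps, and let L be a unital torsion-free graded left B-module. Then the canonical map γ : B ⊗_B L → B·HOM_A(P, P⊗_B L), γ(b⊗l)(p) = pb⊗l, is a surjective graded left B-module homomorphism of degree e with left B-torsion kernel. -/

import Mathlib

/-!
Common infrastructure: non-unital (graded) rings, non-unital graded modules
(given by explicit action functions), graded homomorphisms of all degrees,
traces, torsion submodules, balanced tensor products, and graded Morita
contexts, following Dokuchaev–Simón, "Graded Equivalence for Graded
Idempotent Rings".
-/

open DirectSum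

section CommonDefs

variable {Γ : Type*} [Group Γ] {A B M N P Q : Type*}

/-- `M` is a left module over the non-unital ring `A` via the action `s`. -/
structure IsLMod (A M : Type*) [NonUnitalRing A] [AddCommGroup M] (s : A → M → M) : Prop where
  smul_add : ∀ (a : A) (m n : M), s a (m + n) = s a m + s a n
  add_smul : ∀ (a b : A) (m : M), s (a + b) m = s a m + s b m
  mul_smul : ∀ (a b : A) (m : M), s (a * b) m = s a (s b m)

/-- `M` is a right module over the non-unital ring `B` via the action `s`. -/
structure IsRMod (B M : Type*) [NonUnitalRing B] [AddCommGroup M] (s : M → B → M) : Prop where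
  add_smul : ∀ (m n : M) (b : B), s (m + n) b = s m b + s n b
  smul_add : ∀ (m : M) (a b : B), s m (a + b) = s m a + s m b
  smul_mul : ∀ (m : M) (a b : B), s m (a * b) = s (s m a) b

/-- The ring `A` is idempotent: `A² = A`. -/
def IsIdem (A : Type*) [NonUnitalRing A] : Prop :=
  ∀ a : A, a ∈ AddSubgroup.closure {x : A | ∃ y z : A, x = y * z}

/-- The left `A`-module with action `s` is unital: `AM = M`. -/
def IsUnitalL [NonUnitalRing A] [AddCommGroup M] (s : A → M → M) : Prop :=
  ∀ m : M, m ∈ AddSubgroup.closure {x : M | ∃ (a : A) (m' : M), x = s a m'}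

/-- The right `B`-module with action `s` is unital: `MB = M`. -/
def IsUnitalR [NonUnitalRing B] [AddCommGroup M] (s : M → B → M) : Prop :=
  ∀ m : M, m ∈ AddSubgroup.closure {x : M | ∃ (m' : M) (b : B), x = s m' b}

/-- The left `A`-module with action `s` is torsion-free: `Am = 0 → m = 0`. -/
def IsTorsionFreeL [NonUnitalRing A] [AddCommGroup M] (s : A → M → M) : Prop :=
  ∀ m : M, (∀ a : A, s a m = 0) → m = 0

/-- The right `B`-module with action `s` is torsion-free. -/
def IsTorsionFreeR [NonUnitalRing B] [AddCommGroup M] (s : M → B → M) : Prop :=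
  ∀ m : M, (∀ b : B, s m b = 0) → m = 0

/-- The family `𝒜` makes `A` a `Γ`-graded ring (multiplicativity of the grading;
the direct sum decomposition is recorded by a `DirectSum.Decomposition` instance). -/
def IsGRing [NonUnitalRing A] (𝒜 : Γ → AddSubgroup A) : Prop :=
  ∀ ⦃σ τ : Γ⦄ ⦃a b : A⦄, a ∈ 𝒜 σ → b ∈ 𝒜 τ → a * b ∈ 𝒜 (σ * τ)

/-- Grading compatibility for a left module: `A_σ · M_τ ⊆ M_{στ}`. -/
def IsGModL [NonUnitalRing A] [AddCommGroup M] (𝒜 : Γ → AddSubgroup A)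
    (ℳ : Γ → AddSubgroup M) (s : A → M → M) : Prop :=
  ∀ ⦃σ τ : Γ⦄ ⦃a : A⦄ ⦃m : M⦄, a ∈ 𝒜 σ → m ∈ ℳ τ → s a m ∈ ℳ (σ * τ)

/-- Grading compatibility for a right module: `M_τ · B_σ ⊆ M_{τσ}`. -/
def IsGModR [NonUnitalRing B] [AddCommGroup M] (ℬ : Γ → AddSubgroup B)
    (ℳ : Γ → AddSubgroup M) (s : M → B → M) : Prop :=
  ∀ ⦃σ τ : Γ⦄ ⦃m : M⦄ ⦃b : B⦄, m ∈ ℳ τ → b ∈ ℬ σ → s m b ∈ ℳ (τ * σ)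

/-- `f : M → N` is a homomorphism of left `A`-modules. -/
def IsLinL [NonUnitalRing A] [AddCommGroup M] [AddCommGroup N]
    (sM : A → M → M) (sN : A → N → N) (f : M →+ N) : Prop :=
  ∀ (a : A) (m : M), f (sM a m) = sN a (f m)

/-- `f : M → N` is a homomorphism of right `B`-modules. -/
def IsLinR [NonUnitalRing B] [AddCommGroup M] [AddCommGroup N]
    (sM : M → B → M) (sN : N → B → N) (f : M →+ N) : Prop :=
  ∀ (m : M) (b : B), f (sM m b) = sN (f m) b

/-- `f` is a graded homomorphism of degree `σ` (left module convention):
`f(M_τ) ⊆ N_{τσ}`. -/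
def IsDegL [AddCommGroup M] [AddCommGroup N] (ℳ : Γ → AddSubgroup M)
    (𝒩 : Γ → AddSubgroup N) (σ : Γ) (f : M →+ N) : Prop :=
  ∀ τ : Γ, ∀ m ∈ ℳ τ, f m ∈ 𝒩 (τ * σ)

/-- `f` is a graded homomorphism of degree `σ` (right module convention):
`f(M_τ) ⊆ N_{στ}`. -/
def IsDegR [AddCommGroup M] [AddCommGroup N] (ℳ : Γ → AddSubgroup M)
    (𝒩 : Γ → AddSubgroup N) (σ : Γ) (f : M →+ N) : Prop :=
  ∀ τ : Γ, ∀ m ∈ ℳ τ, f m ∈ 𝒩 (σ * τ)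

/-- `HOM_A(M,N)`: the additive group of graded left `A`-module homomorphisms
of all degrees (i.e. sums of homogeneous `A`-linear maps). -/
def HOML [NonUnitalRing A] [AddCommGroup M] [AddCommGroup N]
    (sM : A → M → M) (sN : A → N → N)
    (ℳ : Γ → AddSubgroup M) (𝒩 : Γ → AddSubgroup N) : AddSubgroup (M →+ N) :=
  AddSubgroup.closure {f | IsLinL sM sN f ∧ ∃ σ : Γ, IsDegL ℳ 𝒩 σ f}

/-- `HOM_B(M,N)` for right modules. -/
def HOMR [NonUnitalRing B] [AddCommGroup M] [AddCommGroup N]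
    (sM : M → B → M) (sN : N → B → N)
    (ℳ : Γ → AddSubgroup M) (𝒩 : Γ → AddSubgroup N) : AddSubgroup (M →+ N) :=
  AddSubgroup.closure {f | IsLinR sM sN f ∧ ∃ σ : Γ, IsDegR ℳ 𝒩 σ f}

/-- Given a subgroup `H` of homomorphisms `M →+ N` and a `C`-action on `M`
(`tw`), this is the subgroup `C·H` generated by the twisted maps
`c·f = f ∘ (tw c)`.  It models e.g. `B·HOM_A(P,N)` with `(b·f)(p) = f(pb)`. -/
def smulHOM [AddCommGroup M] [AddCommGroup N] (C : Type*)
    (H : AddSubgroup (M →+ N)) (tw : C → M → M) : AddSubgroup (M →+ N) :=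
  AddSubgroup.closure {g | ∃ (c : C) (f : M →+ N), f ∈ H ∧ ∀ m : M, g m = f (tw c m)}

/-- The graded trace `Tr_M(P)`: the additive subgroup of `M` generated by the
images of all graded homomorphisms `P → M` of arbitrary degree. -/
def TraceL [NonUnitalRing A] [AddCommGroup P] [AddCommGroup M]
    (sP : A → P → P) (sM : A → M → M)
    (𝓟 : Γ → AddSubgroup P) (ℳ : Γ → AddSubgroup M) : AddSubgroup M :=
  AddSubgroup.closure {x | ∃ f ∈ HOML sP sM 𝓟 ℳ, ∃ p : P, x = f p}

/-- The torsion part `t_A(M) = {m ∈ M | A·m = 0}`, as an additive subgroup. -/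
def torsionL [NonUnitalRing A] [AddCommGroup M] {s : A → M → M}
    (hM : IsLMod A M s) : AddSubgroup M where
  carrier := {m : M | ∀ a : A, s a m = 0}
  zero_mem' := by
    intro a
    have h := hM.smul_add a 0 0
    rw [add_zero] at h
    exact left_eq_add.mp h
  add_mem' := by
    intro m n hm hn a
    rw [hM.smul_add, hm a, hn a, add_zero]
  neg_mem' := by
    intro m hm a
    have h0 : s a (0 : M) = 0 := by
      have h := hM.smul_add a 0 0
      rw [add_zero] at h
      exact left_eq_add.mp h
    have h := hM.smul_add a m (-m)
    rw [add_neg_cancel, h0, hm a, zero_add] at h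
    exact h.symm

end CommonDefs

section Tensor

variable (B : Type*) {P Q : Type*} [AddCommGroup P] [AddCommGroup Q]

/-- Relations defining the balanced tensor product `P ⊗_B Q` of a right
`B`-module `P` (action `rs`) and a left `B`-module `Q` (action `ls`). -/
def TenRel (rs : P → B → P) (ls : B → Q → Q) : AddSubgroup (FreeAbelianGroup (P × Q)) :=
  AddSubgroup.closure
    ({x | ∃ (p p' : P) (q : Q), x = FreeAbelianGroup.of (p + p', q) -
        FreeAbelianGroup.of (p, q) - FreeAbelianGroup.of (p', q)} ∪
     {x | ∃ (p : P) (q q' : Q), x = FreeAbelianGroup.of (p, q + q') -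
        FreeAbelianGroup.of (p, q) - FreeAbelianGroup.of (p, q')} ∪
     {x | ∃ (p : P) (b : B) (q : Q), x = FreeAbelianGroup.of (rs p b, q) -
        FreeAbelianGroup.of (p, ls b q)})

/-- The balanced tensor product `P ⊗_B Q`. -/
abbrev Ten (rs : P → B → P) (ls : B → Q → Q) : Type _ :=
  FreeAbelianGroup (P × Q) ⧸ TenRel B rs ls

/-- The elementary tensor `p ⊗ q`. -/
def tmul {B : Type*} {rs : P → B → P} {ls : B → Q → Q} (p : P) (q : Q) :
    Ten B rs ls :=
  QuotientAddGroup.mk (FreeAbelianGroup.of (p, q))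

/-- The natural grading of the tensor product: the `ρ`-component is generated
by the `p ⊗ q` with `p, q` homogeneous of degrees multiplying to `ρ`. -/
def TenGr {Γ : Type*} [Group Γ] {B : Type*} {rs : P → B → P} {ls : B → Q → Q}
    (𝓟 : Γ → AddSubgroup P) (𝒬 : Γ → AddSubgroup Q) (ρ : Γ) :
    AddSubgroup (Ten B rs ls) :=
  AddSubgroup.closure
    {x | ∃ (σ τ : Γ) (p : P) (q : Q), p ∈ 𝓟 σ ∧ q ∈ 𝒬 τ ∧ σ * τ = ρ ∧ x = tmul p q}

end Tensor

section Morita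

/-- A graded Morita context `(A, B, P, Q, μ, ν)` between idempotent graded
rings, with the trace maps given by the balanced pairings
`pr = ⟨-,-⟩ : P × Q → A` and `br = [-,-] : Q × P → B`, both surjective. -/
structure GMoritaCtx (Γ : Type*) [Group Γ] (A B P Q : Type*)
    [NonUnitalRing A] [NonUnitalRing B] [AddCommGroup P] [AddCommGroup Q]
    (𝒜 : Γ → AddSubgroup A) (ℬ : Γ → AddSubgroup B)
    (𝓟 : Γ → AddSubgroup P) (𝒬 : Γ → AddSubgroup Q)
    (ap : A → P → P) (pb : P → B → P) (bq : B → Q → Q) (qa : Q → A → Q)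
    (pr : P → Q → A) (br : Q → P → B) : Prop where
  gradeA : IsGRing 𝒜
  gradeB : IsGRing ℬ
  idemA : IsIdem A
  idemB : IsIdem B
  lmodP : IsLMod A P ap
  rmodP : IsRMod B P pb
  bimodP : ∀ (a : A) (p : P) (b : B), pb (ap a p) b = ap a (pb p b)
  lmodQ : IsLMod B Q bq
  rmodQ : IsRMod A Q qa
  bimodQ : ∀ (b : B) (q : Q) (a : A), qa (bq b q) a = bq b (qa q a)
  unitalPl : IsUnitalL ap
  unitalPr : IsUnitalR pb
  unitalQl : IsUnitalL bq
  unitalQr : IsUnitalR qa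
  gradePl : IsGModL 𝒜 𝓟 ap
  gradePr : IsGModR ℬ 𝓟 pb
  gradeQl : IsGModL ℬ 𝒬 bq
  gradeQr : IsGModR 𝒜 𝒬 qa
  pr_addl : ∀ (p p' : P) (q : Q), pr (p + p') q = pr p q + pr p' q
  pr_addr : ∀ (p : P) (q q' : Q), pr p (q + q') = pr p q + pr p q'
  br_addl : ∀ (q q' : Q) (p : P), br (q + q') p = br q p + br q' p
  br_addr : ∀ (q : Q) (p p' : P), br q (p + p') = br q p + br q p'
  pr_bal : ∀ (p : P) (b : B) (q : Q), pr (pb p b) q = pr p (bq b q)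
  br_bal : ∀ (q : Q) (a : A) (p : P), br (qa q a) p = br q (ap a p)
  pr_linl : ∀ (a : A) (p : P) (q : Q), pr (ap a p) q = a * pr p q
  pr_linr : ∀ (p : P) (q : Q) (a : A), pr p (qa q a) = pr p q * a
  br_linl : ∀ (b : B) (q : Q) (p : P), br (bq b q) p = b * br q p
  br_linr : ∀ (q : Q) (p : P) (b : B), br q (pb p b) = br q p * b
  pr_graded : ∀ ⦃σ τ : Γ⦄ ⦃p : P⦄ ⦃q : Q⦄, p ∈ 𝓟 σ → q ∈ 𝒬 τ → pr p q ∈ 𝒜 (σ * τ)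
  br_graded : ∀ ⦃σ τ : Γ⦄ ⦃q : Q⦄ ⦃p : P⦄, q ∈ 𝒬 σ → p ∈ 𝓟 τ → br q p ∈ ℬ (σ * τ)
  assoc1 : ∀ (p' : P) (q : Q) (p : P), pb p' (br q p) = ap (pr p' q) p
  assoc2 : ∀ (q' : Q) (p : P) (q : Q), qa q' (pr p q) = bq (br q' p) q
  sur_pr : ∀ a : A, a ∈ AddSubgroup.closure {x : A | ∃ (p : P) (q : Q), x = pr p q}
  sur_br : ∀ b : B, b ∈ AddSubgroup.closure {x : B | ∃ (q : Q) (p : P), x = br q p}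

end Morita

section TenHelpers

variable {B P Q : Type*} [AddCommGroup P] [AddCommGroup Q]
  {rs : P → B → P} {ls : B → Q → Q}

lemma tmul_rel_zero {x : FreeAbelianGroup (P × Q)} (h : x ∈ TenRel B rs ls) :
    (QuotientAddGroup.mk x : Ten B rs ls) = 0 :=
  (QuotientAddGroup.eq_zero_iff x).mpr h

lemma tmul_add_left (p p' : P) (q : Q) :
    (tmul (p + p') q : Ten B rs ls) = tmul p q + tmul p' q := by
  have h : (QuotientAddGroup.mk (FreeAbelianGroup.of (p + p', q) -
      FreeAbelianGroup.of (p, q) - FreeAbelianGroup.of (p', q)) : Ten B rs ls) = 0 :=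
    tmul_rel_zero (AddSubgroup.subset_closure (by
      simp only [Set.mem_union, Set.mem_setOf_eq]
      exact Or.inl (Or.inl ⟨p, p', q, rfl⟩)))
  rw [QuotientAddGroup.mk_sub, QuotientAddGroup.mk_sub, sub_sub, sub_eq_zero] at h
  exact h

lemma tmul_add_right (p : P) (q q' : Q) :
    (tmul p (q + q') : Ten B rs ls) = tmul p q + tmul p q' := by
  have h : (QuotientAddGroup.mk (FreeAbelianGroup.of (p, q + q') -
      FreeAbelianGroup.of (p, q) - FreeAbelianGroup.of (p, q')) : Ten B rs ls) = 0 :=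
    tmul_rel_zero (AddSubgroup.subset_closure (by
      simp only [Set.mem_union, Set.mem_setOf_eq]
      exact Or.inl (Or.inr ⟨p, q, q', rfl⟩)))
  rw [QuotientAddGroup.mk_sub, QuotientAddGroup.mk_sub, sub_sub, sub_eq_zero] at h
  exact h

lemma tmul_bal (p : P) (b : B) (q : Q) :
    (tmul (rs p b) q : Ten B rs ls) = tmul p (ls b q) := by
  have h : (QuotientAddGroup.mk (FreeAbelianGroup.of (rs p b, q) -
      FreeAbelianGroup.of (p, ls b q)) : Ten B rs ls) = 0 :=
    tmul_rel_zero (AddSubgroup.subset_closure (by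
      simp only [Set.mem_union, Set.mem_setOf_eq]
      exact Or.inr ⟨p, b, q, rfl⟩))
  rw [QuotientAddGroup.mk_sub, sub_eq_zero] at h
  exact h

lemma tmul_zero_left (q : Q) : (tmul 0 q : Ten B rs ls) = 0 := by
  have := tmul_add_left (rs := rs) (ls := ls) (0 : P) 0 q
  rw [add_zero] at this
  exact left_eq_add.mp this

lemma tmul_zero_right (p : P) : (tmul p 0 : Ten B rs ls) = 0 := by
  have := tmul_add_right (rs := rs) (ls := ls) p (0 : Q) 0
  rw [add_zero] at this
  exact left_eq_add.mp this

lemma tmul_neg_left (p : P) (q : Q) :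
    (tmul (-p) q : Ten B rs ls) = -tmul p q := by
  have := tmul_add_left (rs := rs) (ls := ls) p (-p) q
  rw [add_neg_cancel, tmul_zero_left] at this
  exact (eq_neg_of_add_eq_zero_right this.symm)

lemma Ten.ind {motive : Ten B rs ls → Prop}
    (h0 : motive 0) (ht : ∀ p q, motive (tmul p q))
    (hn : ∀ x, motive x → motive (-x))
    (ha : ∀ x y, motive x → motive y → motive (x + y)) :
    ∀ x : Ten B rs ls, motive x := by
  intro x
  refine QuotientAddGroup.induction_on x fun z => ?_
  refine FreeAbelianGroup.induction_on z h0 (fun y => ?_) (fun y _ => ?_)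
    (fun y w hy hw => ?_)
  · exact ht y.1 y.2
  · rw [QuotientAddGroup.mk_neg]
    exact hn _ (ht y.1 y.2)
  · rw [QuotientAddGroup.mk_add]
    exact ha _ _ hy hw

/-- `l ↦ (p ↦ p ⊗ l)` as an additive homomorphism. -/
def tmulHomL {B P L : Type*} [AddCommGroup P] [AddCommGroup L]
    (pb : P → B → P) (sL : B → L → L) : L →+ (P →+ Ten B pb sL) where
  toFun l :=
    { toFun := fun p => tmul p l
      map_zero' := tmul_zero_left l
      map_add' := fun p p' => tmul_add_left p p' l }
  map_zero' := by ext p; exact tmul_zero_right p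
  map_add' l l' := by ext p; exact tmul_add_right p l l'

/-- The map `p ⊗ l ↦ f(p) ⊗ l : P ⊗_B L → B ⊗_B L` induced by a balanced
additive `f : P → B`. -/
def phiHom {B P L : Type*} [NonUnitalRing B] [AddCommGroup P] [AddCommGroup L]
    (pb : P → B → P) (sL : B → L → L) (f : P → B)
    (hadd : ∀ p p', f (p + p') = f p + f p')
    (hbal : ∀ p b, f (pb p b) = f p * b) :
    Ten B pb sL →+ Ten B (fun b b' : B => b * b') sL :=
  QuotientAddGroup.lift (TenRel B pb sL)
    (FreeAbelianGroup.lift fun x : P × L =>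
      (tmul (f x.1) x.2 : Ten B (fun b b' : B => b * b') sL))
    (by
      rw [TenRel]
      refine (AddSubgroup.closure_le _).mpr ?_
      rintro x (((⟨p, p', l, rfl⟩ | ⟨p, l, l', rfl⟩) | ⟨p, b, l, rfl⟩)) <;>
        simp only [SetLike.mem_coe, AddMonoidHom.mem_ker, map_sub, FreeAbelianGroup.lift_apply_of]
      · rw [hadd, tmul_add_left, sub_sub, sub_eq_zero]
      · rw [tmul_add_right, sub_sub, sub_eq_zero]
      · rw [hbal, tmul_bal, sub_eq_zero])

lemma phiHom_tmul {B P L : Type*} [NonUnitalRing B] [AddCommGroup P] [AddCommGroup L]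
    (pb : P → B → P) (sL : B → L → L) (f : P → B)
    (hadd : ∀ p p', f (p + p') = f p + f p')
    (hbal : ∀ p b, f (pb p b) = f p * b) (p : P) (l : L) :
    phiHom pb sL f hadd hbal (tmul p l) = tmul (f p) l := by
  show QuotientAddGroup.lift _ _ _ (QuotientAddGroup.mk _) = _
  rw [QuotientAddGroup.lift_mk]
  exact FreeAbelianGroup.lift_apply_of _ _

/-- The subgroup of `A`-linear additive maps. -/
def linSub {A M N : Type*} [NonUnitalRing A] [AddCommGroup M] [AddCommGroup N]
    (sM : A → M → M) (sN : A → N →+ N) : AddSubgroup (M →+ N) where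
  carrier := {f | ∀ (a : A) (m : M), f (sM a m) = sN a (f m)}
  zero_mem' := fun a m => by simp
  add_mem' := fun {f g} hf hg a m => by
    simp [AddMonoidHom.add_apply, hf a m, hg a m]
  neg_mem' := fun {f} hf a m => by
    simp [AddMonoidHom.neg_apply, hf a m]

end TenHelpers

universe u v

/-- Given a graded Morita context with idempotent graded
rings, unital bimodules and surjective trace maps, and a unital torsion-free
graded left `B`-module `L`, the canonical map
`γ : B ⊗_B L → B·HOM_A(P, P ⊗_B L)`, `γ(b⊗l)(p) = pb⊗l`, is a surjective
graded left `B`-module homomorphism of degree `e` with left `B`-torsion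
kernel. -/
theorem gamma_epimorphism_torsion_kernel
    {Γ : Type v} {A B P Q L : Type u} [Group Γ] [DecidableEq Γ]
    [NonUnitalRing A] [NonUnitalRing B] [AddCommGroup P] [AddCommGroup Q]
    [AddCommGroup L]
    (𝒜 : Γ → AddSubgroup A) (ℬ : Γ → AddSubgroup B)
    (𝓟 : Γ → AddSubgroup P) (𝒬 : Γ → AddSubgroup Q) (𝓛 : Γ → AddSubgroup L)
    [DirectSum.Decomposition 𝒜] [DirectSum.Decomposition ℬ]
    [DirectSum.Decomposition 𝓟] [DirectSum.Decomposition 𝒬]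
    [DirectSum.Decomposition 𝓛]
    (ap : A → P → P) (pb : P → B → P) (bq : B → Q → Q) (qa : Q → A → Q)
    (pr : P → Q → A) (br : Q → P → B)
    (ctx : GMoritaCtx Γ A B P Q 𝒜 ℬ 𝓟 𝒬 ap pb bq qa pr br)
    (sL : B → L → L) (hL : IsLMod B L sL) (hLu : IsUnitalL sL)
    (hLtf : IsTorsionFreeL sL) (hLg : IsGModL ℬ 𝓛 sL)
    -- the left `A`-action on `P ⊗_B L`, `a·(p⊗l) = (ap)⊗l`
    (aT2 : A → Ten B pb sL →+ Ten B pb sL)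
    (haT2 : ∀ (a : A) (p : P) (l : L), aT2 a (tmul p l) = tmul (ap a p) l)
    -- the left `B`-action on `B ⊗_B L`, `b'·(b⊗l) = (b'b)⊗l`
    (bT1 : B → Ten B (fun b b' : B => b * b') sL →+ Ten B (fun b b' : B => b * b') sL)
    (hbT1 : ∀ (b' b : B) (l : L), bT1 b' (tmul b l) = tmul (b' * b) l)
    -- `γ : B ⊗_B L → (P →+ P ⊗_B L)` with `γ(b⊗l)(p) = (pb)⊗l`
    (γ : Ten B (fun b b' : B => b * b') sL →+ (P →+ Ten B pb sL))
    (hγ : ∀ (b : B) (l : L) (p : P), γ (tmul b l) p = tmul (pb p b) l) :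
    -- γ lands in `B·HOM_A(P, P⊗_B L)`
    (∀ t, γ t ∈ smulHOM B
      (HOML ap (fun (a : A) (x : Ten B pb sL) => aT2 a x) 𝓟 (TenGr 𝓟 𝓛))
      (fun (b : B) (p : P) => pb p b)) ∧
    -- γ is left `B`-linear: `γ(b·t) = b·γ(t)` where `(b·f)(p) = f(pb)`
    (∀ (b : B) t (p : P), γ (bT1 b t) p = γ t (pb p b)) ∧
    -- γ is graded of degree `e`
    (∀ (σ τ : Γ) (b : B) (l : L), b ∈ ℬ σ → l ∈ 𝓛 τ →
      IsDegL 𝓟 (TenGr 𝓟 𝓛) (σ * τ) (γ (tmul b l))) ∧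
    -- γ is surjective onto `B·HOM_A(P, P⊗_B L)`
    (∀ g ∈ smulHOM B
      (HOML ap (fun (a : A) (x : Ten B pb sL) => aT2 a x) 𝓟 (TenGr 𝓟 𝓛))
      (fun (b : B) (p : P) => pb p b), ∃ t, γ t = g) ∧
    -- the kernel of γ is left `B`-torsion
    (∀ t, γ t = 0 → ∀ b : B, bT1 b t = 0) := by
  -- notation
  set H := HOML ap (fun (a : A) (x : Ten B pb sL) => aT2 a x) 𝓟 (TenGr 𝓟 𝓛) with hHdef
  set G := smulHOM B H (fun (b : B) (p : P) => pb p b) with hGdef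
  -- `tmulHomL l` is in `HOM_A(P, P ⊗ L)`
  have htmulmem : ∀ l : L, tmulHomL pb sL l ∈ H := by
    intro l
    classical
    rw [← DirectSum.sum_support_decompose 𝓛 l, map_sum]
    refine AddSubgroup.sum_mem _ fun i _ => AddSubgroup.subset_closure ?_
    refine ⟨fun a p => (haT2 a p _).symm, i, fun ρ p hp => AddSubgroup.subset_closure ?_⟩
    exact ⟨ρ, i, p, _, hp, SetLike.coe_mem _, rfl, rfl⟩
  -- every element of `HOM_A` is `A`-linear
  have hlin : ∀ f ∈ H, ∀ (a : A) (p : P), f (ap a p) = aT2 a (f p) := by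
    intro f hf
    have : H ≤ linSub ap aT2 := (AddSubgroup.closure_le _).mpr fun g hg => hg.1
    exact this hf
  -- generators of the image
  have hγtmul : ∀ (b : B) (l : L), γ (tmul b l) ∈ G := by
    intro b l
    exact AddSubgroup.subset_closure ⟨b, tmulHomL pb sL l, htmulmem l,
      fun m => by rw [hγ]; rfl⟩
  have part1 : ∀ t, γ t ∈ G := by
    refine Ten.ind ?_ ?_ ?_ ?_
    · rw [map_zero]; exact zero_mem _
    · exact hγtmul
    · intro x hx; rw [map_neg]; exact neg_mem hx
    · intro x y hx hy; rw [map_add]; exact add_mem hx hy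
  have hpb0 : ∀ m : P, pb m 0 = 0 := by
    intro m
    have := ctx.rmodP.smul_add m 0 0
    rw [add_zero] at this
    exact left_eq_add.mp this
  have hpbneg : ∀ (m : P) (b : B), pb m (-b) = -pb m b := by
    intro m b
    have := ctx.rmodP.smul_add m b (-b)
    rw [add_neg_cancel, hpb0] at this
    exact eq_neg_of_add_eq_zero_right this.symm
  have part2 : ∀ (b : B) (t) (p : P), γ (bT1 b t) p = γ t (pb p b) := by
    intro b t p
    induction t using Ten.ind with
    | h0 => simp
    | ht b' l => rw [hbT1, hγ, hγ, ctx.rmodP.smul_mul]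
    | hn x hx =>
      rw [map_neg, map_neg, map_neg, AddMonoidHom.neg_apply, AddMonoidHom.neg_apply, hx]
    | ha x y hx hy =>
      rw [map_add, map_add, map_add, AddMonoidHom.add_apply, AddMonoidHom.add_apply, hx, hy]
  have part3 : ∀ (σ τ : Γ) (b : B) (l : L), b ∈ ℬ σ → l ∈ 𝓛 τ →
      IsDegL 𝓟 (TenGr 𝓟 𝓛) (σ * τ) (γ (tmul b l)) := by
    intro σ τ b l hb hl ρ p hp
    rw [hγ]
    exact AddSubgroup.subset_closure
      ⟨ρ * σ, τ, pb p b, l, ctx.gradePr hp hb, hl, by rw [mul_assoc], rfl⟩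
  -- the maps `Φ_q : P ⊗ L → B ⊗ L`
  let Φ : Q → (Ten B pb sL →+ Ten B (fun b b' : B => b * b') sL) := fun q =>
    phiHom pb sL (fun p => br q p) (fun p p' => ctx.br_addr q p p')
      (fun p b => ctx.br_linr q p b)
  have hΦ : ∀ (q : Q) (p : P) (l : L), Φ q (tmul p l) = tmul (br q p) l :=
    fun q p l => phiHom_tmul _ _ _ _ _ p l
  -- key identity: γ (Φ_q x) m = (pr m q) • x
  have hkey : ∀ (q : Q) (m : P) (x : Ten B pb sL), γ (Φ q x) m = aT2 (pr m q) x := by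
    intro q m
    refine Ten.ind ?_ ?_ ?_ ?_
    · rw [map_zero, map_zero, map_zero]; rfl
    · intro p l
      rw [hΦ, hγ, ctx.assoc1, haT2]
    · intro x hx
      rw [map_neg, map_neg, map_neg, AddMonoidHom.neg_apply, hx]
    · intro x y hx hy
      rw [map_add, map_add, map_add, AddMonoidHom.add_apply, hx, hy]
  -- surjectivity
  have part4 : ∀ g ∈ G, ∃ t, γ t = g := by
    have claimD : ∀ (b : B) (f : P →+ Ten B pb sL),
        (∀ (a : A) (p : P), f (ap a p) = aT2 a (f p)) →
        ∃ t, ∀ m, γ t m = f (pb m b) := by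
      intro b f hf
      refine AddSubgroup.closure_induction
        (p := fun b _ => ∃ t, ∀ m, γ t m = f (pb m b)) ?_ ?_ ?_ ?_ (ctx.sur_br b)
      · rintro x ⟨q, p', rfl⟩
        refine ⟨Φ q (f p'), fun m => ?_⟩
        rw [hkey, ← hf, ctx.assoc1]
      · exact ⟨0, fun m => by rw [map_zero, hpb0, map_zero]; rfl⟩
      · rintro x y _ _ ⟨t, ht⟩ ⟨t', ht'⟩
        refine ⟨t + t', fun m => ?_⟩
        rw [map_add, AddMonoidHom.add_apply, ht m, ht' m, ctx.rmodP.smul_add, map_add]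
      · rintro x _ ⟨t, ht⟩
        refine ⟨-t, fun m => ?_⟩
        rw [map_neg, AddMonoidHom.neg_apply, ht m, hpbneg, map_neg]
    intro g hg
    refine AddSubgroup.closure_induction
      (p := fun g _ => ∃ t, γ t = g) ?_ ?_ ?_ ?_ hg
    · rintro x ⟨c, f, hfH, hx⟩
      obtain ⟨t, ht⟩ := claimD c f (hlin f hfH)
      exact ⟨t, AddMonoidHom.ext fun m => by rw [ht m, hx m]⟩
    · exact ⟨0, map_zero γ⟩
    · rintro x y _ _ ⟨t, rfl⟩ ⟨t', rfl⟩
      exact ⟨t + t', map_add γ t t'⟩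
    · rintro x _ ⟨t, rfl⟩
      exact ⟨-t, map_neg γ t⟩
  -- additivity of the action `bT1` in the ring variable
  have hb0 : ∀ t, bT1 0 t = 0 := by
    refine Ten.ind ?_ ?_ ?_ ?_
    · rw [map_zero]
    · intro b' l
      rw [hbT1, zero_mul, tmul_zero_left]
    · intro x hx; rw [map_neg, hx, neg_zero]
    · intro x y hx hy; rw [map_add, hx, hy, add_zero]
  have hbadd : ∀ (b b' : B) (t), bT1 (b + b') t = bT1 b t + bT1 b' t := by
    intro b b'
    refine Ten.ind ?_ ?_ ?_ ?_
    · rw [map_zero, map_zero, map_zero, add_zero]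
    · intro b'' l
      rw [hbT1, hbT1, hbT1, add_mul, tmul_add_left]
    · intro x hx
      rw [map_neg, map_neg, map_neg, hx, neg_add]
    · intro x y hx hy
      rw [map_add, map_add, map_add, hx, hy]
      abel
  have hbneg : ∀ (b : B) (t), bT1 (-b) t = -bT1 b t := by
    intro b t
    have := hbadd b (-b) t
    rw [add_neg_cancel, hb0] at this
    exact eq_neg_of_add_eq_zero_right this.symm
  -- torsion kernel
  have part5 : ∀ t, γ t = 0 → ∀ b : B, bT1 b t = 0 := by
    intro t hγt b
    -- for generators `br q p`: `bT1 (br q p) t = Φ_q (γ t p)`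
    have hgen : ∀ (q : Q) (p : P) (t'), bT1 (br q p) t' = Φ q (γ t' p) := by
      intro q p
      refine Ten.ind ?_ ?_ ?_ ?_
      · rw [map_zero, map_zero, AddMonoidHom.zero_apply, map_zero]
      · intro b' l
        rw [hbT1, hγ, hΦ, ctx.br_linr]
      · intro x hx
        rw [map_neg, map_neg, AddMonoidHom.neg_apply, map_neg, hx]
      · intro x y hx hy
        rw [map_add, map_add, AddMonoidHom.add_apply, map_add, hx, hy]
    refine AddSubgroup.closure_induction
      (p := fun b _ => bT1 b t = 0) ?_ ?_ ?_ ?_ (ctx.sur_br b)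
    · rintro x ⟨q, p, rfl⟩
      rw [hgen, hγt, AddMonoidHom.zero_apply, map_zero]
    · exact hb0 t
    · intro x y _ _ hx hy
      rw [hbadd, hx, hy, add_zero]
    · intro x _ hx
      rw [hbneg, hx, neg_zero]
  exact ⟨part1, part2, part3, part4, part5⟩
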